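/- arXiv:2007.15102 — 5 statements merged into one kernel-verified Lean document; each statement's English description precedes it below -/
import Mathlib

section
/- Let G be a graph on n vertices admitting a simultaneous 1-stack 1-queue layout with respect to a vertex order σ = (v_1, ..., v_n); that is, no two edges cross and no two edges nest in σ. Then G has pathwidth at most 2. Moreover, there is a path decomposition with n bags B_1, ..., B_n such that |B_x| ≤ 3 and v_x ∈ B_x for all x. -/
/-!
The bag at a vertex `j` consists of `j` itself, of the left end `x < j` of a longest edge
`x v` (over all edges into `v`) with `v ≥ j`, and of a vertex `x > j` having two left
neighbours `≤ j`. A crossing or a nesting pair of edges arises whenever two vertices qualify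
for the same role, so each role is filled at most once and bags have at most three elements.
For a fixed vertex both roles hold on an interval of values of `j`, which gives contiguity;
an edge `u v` with `u < v` lies in the bag at `v` if it is the longest edge into `v`, and
otherwise in the bag at `u`.
-/

namespace SimpleGraph

variable {α : Type*} [LinearOrder α] (G : SimpleGraph α)

def NoCrossing : Prop :=
  ∀ u v x y : α, G.Adj u v → G.Adj x y → u < v → x < y → ¬ (u < x ∧ x < v ∧ v < y)

def NoNesting : Prop :=
  ∀ u v x y : α, G.Adj u v → G.Adj x y → u < v → x < y → ¬ (u < x ∧ x < y ∧ y < v)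

def StartsLongestEdgeOver (j x : α) : Prop :=
  x < j ∧ ∃ v, j ≤ v ∧ G.Adj x v ∧ ∀ u, G.Adj u v → u < v → x ≤ u

def HasTwoLeftNeighborsUpTo (j x : α) : Prop :=
  j < x ∧ ∃ a b, G.Adj a x ∧ G.Adj b x ∧ a < b ∧ b ≤ j

variable {G}

theorem subsingleton_of_not_lt_of_mem {s : Set α} (h : ∀ x ∈ s, ∀ y ∈ s, ¬ x < y) :
    s.Subsingleton := fun x hx y hy =>
  le_antisymm (not_lt.1 fun hyx => h y hy x hx hyx) (not_lt.1 fun hxy => h x hx y hy hxy)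

theorem subsingleton_startsLongestEdgeOver (hcross : G.NoCrossing) (hnest : G.NoNesting)
    (j : α) : {x | G.StartsLongestEdgeOver j x}.Subsingleton := by
  refine subsingleton_of_not_lt_of_mem ?_
  rintro x₁ ⟨hx₁j, v₁, hjv₁, hadj₁, -⟩ x₂ ⟨hx₂j, v₂, hjv₂, hadj₂, hmin₂⟩ h12
  have hx₂v₁ : x₂ < v₁ := hx₂j.trans_le hjv₁
  have hx₂v₂ : x₂ < v₂ := hx₂j.trans_le hjv₂
  rcases lt_trichotomy v₁ v₂ with h | rfl | h
  · exact hcross x₁ v₁ x₂ v₂ hadj₁ hadj₂ (h12.trans hx₂v₁) hx₂v₂ ⟨h12, hx₂v₁, h⟩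
  · exact (hmin₂ x₁ hadj₁ (h12.trans hx₂v₁)).not_gt h12
  · exact hnest x₁ v₁ x₂ v₂ hadj₁ hadj₂ (h12.trans hx₂v₁) hx₂v₂ ⟨h12, hx₂v₂, h⟩

theorem subsingleton_hasTwoLeftNeighborsUpTo (hcross : G.NoCrossing) (hnest : G.NoNesting)
    (j : α) : {x | G.HasTwoLeftNeighborsUpTo j x}.Subsingleton := by
  refine subsingleton_of_not_lt_of_mem ?_
  rintro x₁ ⟨hjx₁, a₁, b₁, ha₁, hb₁, hab₁, hb₁j⟩ x₂ ⟨-, -, b₂, -, hb₂, -, hb₂j⟩ h12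
  have hb₁x₁ : b₁ < x₁ := hb₁j.trans_lt hjx₁
  have hb₂x₁ : b₂ < x₁ := hb₂j.trans_lt hjx₁
  rcases lt_trichotomy b₁ b₂ with h | rfl | h
  · exact hcross b₁ x₁ b₂ x₂ hb₁ hb₂ hb₁x₁ (hb₂x₁.trans h12) ⟨h, hb₂x₁, h12⟩
  · exact hcross a₁ x₁ b₁ x₂ ha₁ hb₂ (hab₁.trans hb₁x₁) (hb₁x₁.trans h12) ⟨hab₁, hb₁x₁, h12⟩
  · exact hnest b₂ x₂ b₁ x₁ hb₂ hb₁ (hb₂x₁.trans h12) hb₁x₁ ⟨h, hb₁x₁, h12⟩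

variable (G) [Fintype α]

open Classical in
noncomputable def pathBag (j : α) : Finset α :=
  insert j (Finset.univ.filter (G.StartsLongestEdgeOver j) ∪
    Finset.univ.filter (G.HasTwoLeftNeighborsUpTo j))

variable {G}

theorem mem_pathBag {j x : α} :
    x ∈ G.pathBag j ↔
      x = j ∨ G.StartsLongestEdgeOver j x ∨ G.HasTwoLeftNeighborsUpTo j x := by
  simp [pathBag]

theorem self_mem_pathBag (j : α) : j ∈ G.pathBag j :=
  mem_pathBag.2 (Or.inl rfl)

theorem exists_mem_pathBag_of_adj_of_lt {u v : α} (huv : G.Adj u v) (hlt : u < v) :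
    ∃ i, u ∈ G.pathBag i ∧ v ∈ G.pathBag i := by
  by_cases hlonger : ∃ w, G.Adj w v ∧ w < u
  · obtain ⟨w, hwv, hwu⟩ := hlonger
    exact ⟨u, self_mem_pathBag u,
      mem_pathBag.2 (Or.inr (Or.inr ⟨hlt, w, u, hwv, huv, hwu, le_rfl⟩))⟩
  · refine ⟨v, mem_pathBag.2 (Or.inr (Or.inl ⟨hlt, v, le_rfl, huv, fun w hwv _ => ?_⟩)),
      self_mem_pathBag v⟩
    exact not_lt.1 fun hwu => hlonger ⟨w, hwv, hwu⟩

theorem exists_mem_pathBag_of_adj {u v : α} (huv : G.Adj u v) :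
    ∃ i, u ∈ G.pathBag i ∧ v ∈ G.pathBag i := by
  rcases huv.ne.lt_or_gt with hlt | hlt
  · exact exists_mem_pathBag_of_adj_of_lt huv hlt
  · obtain ⟨i, hv, hu⟩ := exists_mem_pathBag_of_adj_of_lt huv.symm hlt
    exact ⟨i, hu, hv⟩

theorem mem_pathBag_of_le_of_le {v i j k : α} (hij : i ≤ j) (hjk : j ≤ k)
    (hi : v ∈ G.pathBag i) (hk : v ∈ G.pathBag k) : v ∈ G.pathBag j := by
  rw [mem_pathBag] at hi hk ⊢
  rcases lt_trichotomy v j with hvj | rfl | hjv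
  · rcases hk with rfl | ⟨-, w, hkw, hlongest⟩ | ⟨hkv, -⟩
    · exact absurd hjk hvj.not_ge
    · exact Or.inr (Or.inl ⟨hvj, w, hjk.trans hkw, hlongest⟩)
    · exact absurd (hjk.trans_lt hkv) hvj.not_gt
  · exact Or.inl rfl
  · rcases hi with rfl | ⟨hvi, -⟩ | ⟨-, a, b, ha, hb, hab, hbi⟩
    · exact absurd hij hjv.not_ge
    · exact absurd (hvi.trans_le hij) hjv.not_gt
    · exact Or.inr (Or.inr ⟨hjv, a, b, ha, hb, hab, hbi.trans hij⟩)

theorem card_pathBag_le_three (hcross : G.NoCrossing) (hnest : G.NoNesting) (j : α) :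
    (G.pathBag j).card ≤ 3 := by
  classical
  have hstart : (Finset.univ.filter (G.StartsLongestEdgeOver j)).card ≤ 1 :=
    Finset.card_le_one.2 fun x hx y hy =>
      subsingleton_startsLongestEdgeOver hcross hnest j (by simpa using hx) (by simpa using hy)
  have htwo : (Finset.univ.filter (G.HasTwoLeftNeighborsUpTo j)).card ≤ 1 :=
    Finset.card_le_one.2 fun x hx y hy =>
      subsingleton_hasTwoLeftNeighborsUpTo hcross hnest j (by simpa using hx) (by simpa using hy)
  calc (G.pathBag j).card
      ≤ (Finset.univ.filter (G.StartsLongestEdgeOver j) ∪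
          Finset.univ.filter (G.HasTwoLeftNeighborsUpTo j)).card + 1 :=
        Finset.card_insert_le _ _
    _ ≤ 1 + 1 + 1 := by grw [Finset.card_union_le, hstart, htwo]

end SimpleGraph

open SimpleGraph in
/-- Lemma 4: if no two edges of `G` cross and no two edges nest with respect to
the vertex order `v_1 < ⋯ < v_n` (vertices are `Fin n` with its natural order),
then `G` has a path decomposition with `n` bags `B_1, …, B_n` such that
`|B_x| ≤ 3` and `v_x ∈ B_x`; in particular the pathwidth of `G` is at most 2. -/
theorem simultaneous_one_stack_one_queue_pathwidth (n : ℕ) (G : SimpleGraph (Fin n))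
    (hcross : ∀ u v x y : Fin n, G.Adj u v → G.Adj x y → u < v → x < y →
      ¬ (u < x ∧ x < v ∧ v < y))
    (hnest : ∀ u v x y : Fin n, G.Adj u v → G.Adj x y → u < v → x < y →
      ¬ (u < x ∧ x < y ∧ y < v)) :
    ∃ B : Fin n → Finset (Fin n),
      (∀ u v : Fin n, G.Adj u v → ∃ i, u ∈ B i ∧ v ∈ B i) ∧
      (∀ (v i j k : Fin n), i ≤ j → j ≤ k → v ∈ B i → v ∈ B k → v ∈ B j) ∧
      (∀ x, (B x).card ≤ 3) ∧
      (∀ x, x ∈ B x) :=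
  ⟨G.pathBag, fun _ _ => exists_mem_pathBag_of_adj,
    fun _ _ _ _ => mem_pathBag_of_le_of_le, card_pathBag_le_three hcross hnest,
    self_mem_pathBag⟩
end

section
/- Suppose a graph G admits a vertex order σ in which no two edges cross and no two edges nest. Then for any edge (v_i, v_n) where v_n is the last vertex of σ and v_i is the σ-smallest neighbor of v_n, every vertex x with v_i <_σ x <_σ v_n is adjacent to v_i, or adjacent to v_n, or isolated among the vertices between them (has no edge to any vertex other than v_i and v_n). -/
/-! A second edge leaving a vertex `x` strictly inside the edge `u < v` cannot reach past
either endpoint (the two edges would cross) nor stay strictly inside (they would nest),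
so its other endpoint is `u` or `v`. -/

section CrossingNesting

variable {V : Type*} [LinearOrder V] {G : SimpleGraph V}
  (hcross : ∀ u v x y : V, G.Adj u v → G.Adj x y → u < v → x < y →
    ¬ (u < x ∧ x < v ∧ v < y))
  (hnest : ∀ u v x y : V, G.Adj u v → G.Adj x y → u < v → x < y →
    ¬ (u < x ∧ x < y ∧ y < v))
  {u v x y : V}

include hcross hnest

theorem eq_right_of_adj_of_mem_Ioo_of_lt (huv : G.Adj u v) (hx : x ∈ Set.Ioo u v)
    (hxy : G.Adj x y) (h : x < y) : y = v := by
  have hlt : u < v := hx.1.trans hx.2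
  rcases lt_trichotomy y v with hyv | hyv | hvy
  · exact absurd ⟨hx.1, h, hyv⟩ (hnest u v x y huv hxy hlt h)
  · exact hyv
  · exact absurd ⟨hx.1, hx.2, hvy⟩ (hcross u v x y huv hxy hlt h)

theorem eq_left_of_adj_of_mem_Ioo_of_lt (huv : G.Adj u v) (hx : x ∈ Set.Ioo u v)
    (hxy : G.Adj x y) (h : y < x) : y = u := by
  have hlt : u < v := hx.1.trans hx.2
  rcases lt_trichotomy y u with hyu | hyu | huy
  · exact absurd ⟨hyu, hx.1, hx.2⟩ (hcross y x u v hxy.symm huv h hlt)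
  · exact hyu
  · exact absurd ⟨huy, h, hx.2⟩ (hnest u v y x huv hxy.symm hlt h)

theorem eq_or_eq_of_adj_of_mem_Ioo (huv : G.Adj u v) (hx : x ∈ Set.Ioo u v)
    (hxy : G.Adj x y) : y = u ∨ y = v := by
  rcases lt_trichotomy x y with h | h | h
  · exact .inr (eq_right_of_adj_of_mem_Ioo_of_lt hcross hnest huv hx hxy h)
  · exact absurd h hxy.ne
  · exact .inl (eq_left_of_adj_of_mem_Ioo_of_lt hcross hnest huv hx hxy h)

end CrossingNesting

theorem between_vertices_structure_general {V : Type*} [LinearOrder V] (G : SimpleGraph V)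
    (hcross : ∀ u v x y : V, G.Adj u v → G.Adj x y → u < v → x < y →
      ¬ (u < x ∧ x < v ∧ v < y))
    (hnest : ∀ u v x y : V, G.Adj u v → G.Adj x y → u < v → x < y →
      ¬ (u < x ∧ x < y ∧ y < v))
    (vi vn : V) (hadj : G.Adj vi vn) :
    ∀ x : V, vi < x → x < vn →
      G.Adj vi x ∨ G.Adj x vn ∨ (∀ y : V, G.Adj x y → y = vi ∨ y = vn) :=
  fun _ hvix hxvn => .inr <| .inr fun _ hxy =>
    eq_or_eq_of_adj_of_mem_Ioo hcross hnest hadj ⟨hvix, hxvn⟩ hxy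

/-- Key structural step of Lemma 4: in a vertex order with no two crossing and
no two nesting edges, if `vn` is the last vertex, `vi` its smallest neighbor,
then every vertex `x` strictly between `vi` and `vn` is adjacent to `vi`, or
adjacent to `vn`, or has no neighbor other than `vi` and `vn`. -/
theorem between_vertices_structure {V : Type*} [LinearOrder V] (G : SimpleGraph V)
    (hcross : ∀ u v x y : V, G.Adj u v → G.Adj x y → u < v → x < y →
      ¬ (u < x ∧ x < v ∧ v < y))
    (hnest : ∀ u v x y : V, G.Adj u v → G.Adj x y → u < v → x < y →
      ¬ (u < x ∧ x < y ∧ y < v))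
    (vi vn : V) (hlast : ∀ u : V, u ≤ vn) (hadj : G.Adj vi vn)
    (hmin : ∀ u : V, G.Adj u vn → vi ≤ u) :
    ∀ x : V, vi < x → x < vn →
      G.Adj vi x ∨ G.Adj x vn ∨ (∀ y : V, G.Adj x y → y = vi ∨ y = vn) :=
  between_vertices_structure_general G hcross hnest vi vn hadj
end

section
/- Let G be a graph admitting a simultaneous s-stack q-queue layout. Then G has pathwidth at most 2·s·q. -/
/-!
Fix a stack and a queue and look at the edges of both, i.e. at one of the `s·q` colour classes.
Two such edges crossing a common cut of the vertex order can neither cross nor nest, so they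
share an endpoint: the edges of a colour class crossing a cut form a star. The bag of a vertex
`x` is `x` together with the star centres of all colour classes at the cuts just before and just
after `x`, so it has at most `2·s·q + 1` vertices. Breaking the tie of a one-edge star towards the
right endpoint makes the cuts at which a vertex is a centre an interval next to it, which gives
the path property; an edge `ab` lies in the bag where the centre of its class at the cuts between
`a` and `b` switches from `a` to `b`.
-/

namespace SimultaneousLayout

variable {V : Type*} [LinearOrder V]

def IsStackQueue (E : Set (V × V)) : Prop :=
  ∀ e ∈ E, ∀ f ∈ E,
    ¬ (e.1 < f.1 ∧ f.1 < e.2 ∧ e.2 < f.2) ∧ ¬ (e.1 < f.1 ∧ f.1 < f.2 ∧ f.2 < e.2)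

def cutEdges (E : Set (V × V)) (L : LowerSet V) : Set (V × V) :=
  {e ∈ E | e.1 ∈ L ∧ e.2 ∉ L}

/-- The centre of the star formed by the edges of `E` crossing the cut `L` (see
`IsStackQueue.fst_eq_or_snd_eq`). A single edge has two centres and we take its right endpoint;
`d` is a junk value for when no edge crosses `L`. -/
noncomputable def center (E : Set (V × V)) (L : LowerSet V) (d : V) : V :=
  open Classical in
  if h : ∃ e ∈ cutEdges E L, ∃ f ∈ cutEdges E L, e.2 ≠ f.2 then h.choose.1
  else if h : (cutEdges E L).Nonempty then h.some.2 else d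

section Center

variable {E : Set (V × V)} {L L' : LowerSet V} {d d' v : V} {e f g : V × V}

theorem fst_lt_snd_of_mem_cutEdges (he : e ∈ cutEdges E L) : e.1 < e.2 :=
  lt_of_not_ge fun h => he.2.2 (L.lower h he.2.1)

theorem IsStackQueue.fst_eq_or_snd_eq (hE : IsStackQueue E) (he : e ∈ cutEdges E L)
    (hf : f ∈ cutEdges E L) : e.1 = f.1 ∨ e.2 = f.2 := by
  have hef : e.1 < f.2 := lt_of_not_ge fun h => hf.2.2 (L.lower h he.2.1)
  have hfe : f.1 < e.2 := lt_of_not_ge fun h => he.2.2 (L.lower h hf.2.1)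
  have := fst_lt_snd_of_mem_cutEdges he
  have := fst_lt_snd_of_mem_cutEdges hf
  obtain ⟨hcross, hnest⟩ := hE e he.1 f hf.1
  obtain ⟨hcross', hnest'⟩ := hE f hf.1 e he.1
  rcases lt_trichotomy e.1 f.1 with h | h | h <;> rcases lt_trichotomy e.2 f.2 with h' | h' | h'
  all_goals tauto

theorem IsStackQueue.fst_eq_of_snd_ne (hE : IsStackQueue E) (he : e ∈ cutEdges E L)
    (hf : f ∈ cutEdges E L) (hg : g ∈ cutEdges E L) (hef : e.2 ≠ f.2) : g.1 = e.1 := by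
  have hef' := (hE.fst_eq_or_snd_eq he hf).resolve_right hef
  rcases hE.fst_eq_or_snd_eq hg he with h | h
  · exact h
  · have := (hE.fst_eq_or_snd_eq hg hf).resolve_right (h ▸ hef)
    rw [this, hef']

theorem IsStackQueue.center_eq_fst (hE : IsStackQueue E) (he : e ∈ cutEdges E L)
    (hf : f ∈ cutEdges E L) (hef : e.2 ≠ f.2) : center E L d = e.1 := by
  have h : ∃ e ∈ cutEdges E L, ∃ f ∈ cutEdges E L, e.2 ≠ f.2 := ⟨e, he, f, hf, hef⟩
  obtain ⟨he', f', hf', hef'⟩ := h.choose_spec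
  rw [center, dif_pos h]
  exact (hE.fst_eq_of_snd_ne he' hf' he hef').symm

theorem center_eq_snd (he : e ∈ cutEdges E L) (hsnd : ∀ f ∈ cutEdges E L, f.2 = e.2) :
    center E L d = e.2 := by
  have h : ¬ ∃ e ∈ cutEdges E L, ∃ f ∈ cutEdges E L, e.2 ≠ f.2 := by
    rintro ⟨f, hf, g, hg, hfg⟩
    exact hfg ((hsnd f hf).trans (hsnd g hg).symm)
  rw [center, dif_neg h, dif_pos ⟨e, he⟩]
  exact hsnd _ (Set.Nonempty.some_mem _)

theorem IsStackQueue.center_eq_fst_or_snd (hE : IsStackQueue E) (he : e ∈ cutEdges E L) :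
    center E L d = e.1 ∨ center E L d = e.2 := by
  by_cases hsnd : ∀ f ∈ cutEdges E L, f.2 = e.2
  · exact Or.inr (center_eq_snd he hsnd)
  · push Not at hsnd
    obtain ⟨f, hf, hfe⟩ := hsnd
    exact Or.inl (hE.center_eq_fst he hf hfe.symm)

theorem nonempty_cutEdges_of_center_ne (h : center E L d ≠ d) : (cutEdges E L).Nonempty := by
  by_contra hS
  rw [center, dif_neg fun ⟨e, he, _⟩ => hS ⟨e, he⟩, dif_neg hS] at h
  exact h rfl

theorem IsStackQueue.center_eq_of_le_of_notMem (hE : IsStackQueue E)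
    (hS : (cutEdges E L).Nonempty) (hv : center E L d = v) (hLL' : L ≤ L') (hvL' : v ∉ L') :
    center E L' d' = v := by
  obtain ⟨e, he⟩ := hS
  have hve : v = e.2 := by
    refine (hv ▸ hE.center_eq_fst_or_snd he).resolve_left ?_
    rintro rfl
    exact hvL' (hLL' he.2.1)
  have he' : e ∈ cutEdges E L' := ⟨he.1, hLL' he.2.1, hve ▸ hvL'⟩
  rw [hve]
  refine center_eq_snd he' fun f hf => ?_
  rcases hE.fst_eq_or_snd_eq hf he' with h | h
  · have hfL : f ∈ cutEdges E L := ⟨hf.1, h ▸ he.2.1, fun hfL => hf.2.2 (hLL' hfL)⟩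
    refine ((hv ▸ hE.center_eq_fst_or_snd hfL).resolve_left ?_).symm.trans hve
    rintro rfl
    exact hvL' (hLL' hfL.2.1)
  · exact h

theorem IsStackQueue.center_eq_of_ge_of_mem (hE : IsStackQueue E)
    (hS : (cutEdges E L).Nonempty) (hv : center E L d = v) (hL'L : L' ≤ L) (hvL' : v ∈ L') :
    center E L' d' = v := by
  obtain ⟨e, he⟩ := hS
  have hve : v = e.1 := by
    refine (hv ▸ hE.center_eq_fst_or_snd he).resolve_right ?_
    rintro rfl
    exact he.2.2 (hL'L hvL')
  obtain ⟨f, hf, hfe⟩ : ∃ f ∈ cutEdges E L, f.2 ≠ e.2 := by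
    by_contra! hsnd
    exact (fst_lt_snd_of_mem_cutEdges he).ne ((hve ▸ hv).symm.trans (center_eq_snd he hsnd))
  have hfe1 := hE.fst_eq_of_snd_ne he hf hf hfe.symm
  have he' : e ∈ cutEdges E L' := ⟨he.1, hve ▸ hvL', fun h => he.2.2 (hL'L h)⟩
  have hf' : f ∈ cutEdges E L' := ⟨hf.1, hfe1 ▸ hve ▸ hvL', fun h => hf.2.2 (hL'L h)⟩
  exact hve ▸ hE.center_eq_fst he' hf' hfe.symm

end Center

variable {ι : Type*} [Fintype ι] (E : ι → Set (V × V))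

noncomputable def bag (x : V) : Finset V :=
  insert x (Finset.univ.image (fun c => center (E c) (LowerSet.Iic x) x) ∪
    Finset.univ.image (fun c => center (E c) (LowerSet.Iio x) x))

theorem card_bag_le (x : V) : (bag E x).card ≤ 2 * Fintype.card ι + 1 := by
  calc (bag E x).card
      ≤ (Finset.univ.image (fun c => center (E c) (LowerSet.Iic x) x) ∪
          Finset.univ.image (fun c => center (E c) (LowerSet.Iio x) x)).card + 1 :=
        Finset.card_insert_le _ _
    _ ≤ Fintype.card ι + Fintype.card ι + 1 := by
        gcongr
        exact (Finset.card_union_le _ _).trans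
          (add_le_add Finset.card_image_le Finset.card_image_le)
    _ = 2 * Fintype.card ι + 1 := by ring

variable {E}

theorem mem_bag {x v : V} :
    v ∈ bag E x ↔ v = x ∨ (∃ c, center (E c) (LowerSet.Iic x) x = v) ∨
      ∃ c, center (E c) (LowerSet.Iio x) x = v := by
  simp [bag]

theorem self_mem_bag (x : V) : x ∈ bag E x := mem_bag.2 (Or.inl rfl)

theorem center_Iic_mem_bag (c : ι) (x : V) : center (E c) (LowerSet.Iic x) x ∈ bag E x :=
  mem_bag.2 (Or.inr (Or.inl ⟨c, rfl⟩))

theorem center_Iio_mem_bag (c : ι) (x : V) : center (E c) (LowerSet.Iio x) x ∈ bag E x :=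
  mem_bag.2 (Or.inr (Or.inr ⟨c, rfl⟩))

theorem exists_center_eq_of_mem_bag {x v : V} (hv : v ∈ bag E x) (hvx : v ≠ x) :
    ∃ c, ∃ L : LowerSet V, LowerSet.Iio x ≤ L ∧ L ≤ LowerSet.Iic x ∧
      (cutEdges (E c) L).Nonempty ∧ center (E c) L x = v := by
  rcases mem_bag.1 hv with rfl | ⟨c, hc⟩ | ⟨c, hc⟩
  · exact absurd rfl hvx
  · exact ⟨c, _, fun _ => le_of_lt, le_rfl, nonempty_cutEdges_of_center_ne (hc ▸ hvx), hc⟩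
  · exact ⟨c, _, le_rfl, fun _ => le_of_lt, nonempty_cutEdges_of_center_ne (hc ▸ hvx), hc⟩

variable (hE : ∀ c, IsStackQueue (E c))
include hE

theorem mem_bag_of_lt_of_lt_of_mem_bag {u w v : V} (huw : u < w) (hwv : w < v)
    (hv : v ∈ bag E u) : v ∈ bag E w := by
  obtain ⟨c, L, -, hL, hS, hc⟩ := exists_center_eq_of_mem_bag hv (huw.trans hwv).ne'
  have hLw : L ≤ LowerSet.Iio w := hL.trans fun _ hy => lt_of_le_of_lt hy huw
  rw [← (hE c).center_eq_of_le_of_notMem (d' := w) hS hc hLw hwv.not_gt]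
  exact center_Iio_mem_bag c w

theorem mem_bag_of_lt_of_lt_of_mem_bag' {v w x : V} (hvw : v < w) (hwx : w < x)
    (hv : v ∈ bag E x) : v ∈ bag E w := by
  obtain ⟨c, L, hL, -, hS, hc⟩ := exists_center_eq_of_mem_bag hv (hvw.trans hwx).ne
  have hwL : LowerSet.Iic w ≤ L := (fun _ hy => lt_of_le_of_lt hy hwx : _ ≤ _).trans hL
  rw [← (hE c).center_eq_of_ge_of_mem (d' := w) hS hc hwL hvw.le]
  exact center_Iic_mem_bag c w

theorem mem_bag_of_le_of_le {u w x v : V} (huw : u ≤ w) (hwx : w ≤ x) (hu : v ∈ bag E u)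
    (hx : v ∈ bag E x) : v ∈ bag E w := by
  rcases lt_trichotomy v w with hvw | rfl | hwv
  · rcases hwx.lt_or_eq with hwx | rfl
    · exact mem_bag_of_lt_of_lt_of_mem_bag' hE hvw hwx hx
    · exact hx
  · exact self_mem_bag v
  · rcases huw.lt_or_eq with huw | rfl
    · exact mem_bag_of_lt_of_lt_of_mem_bag hE huw hwv hu
    · exact hu

theorem exists_mem_bag_of_mem [Finite V] {c : ι} {a b : V} (he : (a, b) ∈ E c)
    (hab : a < b) : ∃ x, a ∈ bag E x ∧ b ∈ bag E x := by
  have hcut {t : V} (hat : a ≤ t) (htb : t < b) : (a, b) ∈ cutEdges (E c) (LowerSet.Iic t) :=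
    ⟨he, hat, htb.not_ge⟩
  -- Walk right from `a` through the cuts until the centre of the colour class of `ab`
  -- switches from `a` to `b`; both then lie in the bag between the two cuts.
  have hwalk (t : V) : a ≤ t → t < b → center (E c) (LowerSet.Iic t) t = a →
      ∃ x, a ∈ bag E x ∧ b ∈ bag E x := by
    induction t using WellFoundedGT.induction with
    | _ t ih =>
    intro hat htb hta
    obtain ⟨t', htt', ht'b⟩ := exists_covBy_le_of_lt htb
    have hat' : a ≤ t' := hat.trans htt'.le
    have ha : center (E c) (LowerSet.Iio t') t' = a :=
      (hE c).center_eq_of_ge_of_mem ⟨_, hcut hat htb⟩ hta (fun _ => htt'.le_of_lt)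
        (hat.trans_lt htt'.lt)
    rcases ht'b.lt_or_eq with ht'b | rfl
    · obtain h | h : center (E c) (LowerSet.Iic t') t' = a ∨ _ = b :=
        (hE c).center_eq_fst_or_snd (hcut hat' ht'b)
      · exact ih t' htt'.lt hat' ht'b h
      · exact ⟨t', ha ▸ center_Iio_mem_bag c t', h ▸ center_Iic_mem_bag c t'⟩
    · exact ⟨t', ha ▸ center_Iio_mem_bag c t', self_mem_bag t'⟩
  obtain h | h : center (E c) (LowerSet.Iic a) a = a ∨ _ = b :=
    (hE c).center_eq_fst_or_snd (hcut le_rfl hab)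
  · exact hwalk a le_rfl hab h
  · exact ⟨a, self_mem_bag a, h ▸ center_Iic_mem_bag c a⟩

end SimultaneousLayout

/-- Theorem 2: a graph admitting a simultaneous `s`-stack `q`-queue layout
(with respect to the linear order on `V`) has pathwidth at most `2·s·q`,
i.e. it has a path decomposition all of whose bags have size at most
`2·s·q + 1`. -/
theorem simultaneous_layout_pathwidth {V : Type*} [Fintype V] [LinearOrder V]
    (G : SimpleGraph V) (s q : ℕ)
    (sc : V × V → Fin s)
    (hsc : ∀ e f : V × V,
      (G.Adj e.1 e.2 ∧ e.1 < e.2) → (G.Adj f.1 f.2 ∧ f.1 < f.2) →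
      sc e = sc f → ¬ (e.1 < f.1 ∧ f.1 < e.2 ∧ e.2 < f.2))
    (qc : V × V → Fin q)
    (hqc : ∀ e f : V × V,
      (G.Adj e.1 e.2 ∧ e.1 < e.2) → (G.Adj f.1 f.2 ∧ f.1 < f.2) →
      qc e = qc f → ¬ (e.1 < f.1 ∧ f.1 < f.2 ∧ f.2 < e.2)) :
    ∃ (m : ℕ) (B : Fin m → Finset V),
      (∀ u v : V, G.Adj u v → ∃ i, u ∈ B i ∧ v ∈ B i) ∧
      (∀ (v : V) (i j k : Fin m), i ≤ j → j ≤ k → v ∈ B i → v ∈ B k → v ∈ B j) ∧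
      (∀ i, (B i).card ≤ 2 * s * q + 1) := by
  let E (c : Fin s × Fin q) : Set (V × V) :=
    {e | G.Adj e.1 e.2 ∧ e.1 < e.2 ∧ sc e = c.1 ∧ qc e = c.2}
  have hE (c : Fin s × Fin q) : SimultaneousLayout.IsStackQueue (E c) := fun e he f hf =>
    ⟨hsc e f ⟨he.1, he.2.1⟩ ⟨hf.1, hf.2.1⟩ (he.2.2.1.trans hf.2.2.1.symm),
      hqc e f ⟨he.1, he.2.1⟩ ⟨hf.1, hf.2.1⟩ (he.2.2.2.trans hf.2.2.2.symm)⟩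
  have hcover {u v : V} (huv : G.Adj u v) (h : u < v) :
      ∃ x, u ∈ SimultaneousLayout.bag E x ∧ v ∈ SimultaneousLayout.bag E x :=
    SimultaneousLayout.exists_mem_bag_of_mem hE (c := (sc (u, v), qc (u, v)))
      ⟨huv, h, rfl, rfl⟩ h
  let em : Fin (Fintype.card V) ≃o V := monoEquivOfFin V rfl
  refine ⟨Fintype.card V, fun i => SimultaneousLayout.bag E (em i), fun u v huv => ?_,
    fun v i j k hij hjk =>
      SimultaneousLayout.mem_bag_of_le_of_le hE (em.monotone hij) (em.monotone hjk),
    fun i => by simpa [mul_assoc] using SimultaneousLayout.card_bag_le E (em i)⟩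
  obtain ⟨x, hu, hv⟩ | ⟨x, hv, hu⟩ := huv.ne.lt_or_gt.imp (hcover huv) (hcover huv.symm)
  all_goals exact ⟨em.symm x, by simpa using hu, by simpa using hv⟩
end

section
/- If path decompositions P^1, ..., P^m of graphs G^1, ..., G^m on a common vertex set V all have the same index set (bags B_x^i indexed by x ∈ V with v_x ∈ B_x^i), then the bag-wise union {∪_i B_x^i : x ∈ V} is a path decomposition of the union graph (V, ∪_i E(G^i)), of width at most (Σ_i (width of P^i + 1)) - 1. -/
/-! The bags of all decompositions containing a vertex `v` are indexed by intervals of `V` that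
all contain `v` itself, so their union is again an interval; edges and bag sizes are handled
bag by bag. -/

open Finset

theorem Set.ordConnected_iUnion_of_mem {α ι : Type*} [LinearOrder α] {s : ι → Set α} {a : α}
    (hs : ∀ i, (s i).OrdConnected) (ha : ∀ i, a ∈ s i) : (⋃ i, s i).OrdConnected := by
  refine ⟨fun x hx z hz y hy => ?_⟩
  obtain ⟨i, hxi⟩ := Set.mem_iUnion.1 hx
  obtain ⟨j, hzj⟩ := Set.mem_iUnion.1 hz
  rcases le_total y a with hya | hay
  · exact Set.mem_iUnion.2 ⟨i, (hs i).out hxi (ha i) ⟨hy.1, hya⟩⟩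
  · exact Set.mem_iUnion.2 ⟨j, (hs j).out (ha j) hzj ⟨hay, hy.2⟩⟩

theorem union_of_path_decompositions_general {V : Type*} [DecidableEq V]
    [LinearOrder V] (m : ℕ)
    (G : Fin m → SimpleGraph V) (B : Fin m → V → Finset V) (w : Fin m → ℕ)
    (hcov : ∀ (i : Fin m) (u v : V), (G i).Adj u v → ∃ x, u ∈ B i x ∧ v ∈ B i x)
    (hint : ∀ (i : Fin m) (v x y z : V), x ≤ y → y ≤ z →
      v ∈ B i x → v ∈ B i z → v ∈ B i y)
    (hself : ∀ (i : Fin m) (x : V), x ∈ B i x)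
    (hwidth : ∀ (i : Fin m) (x : V), (B i x).card ≤ w i + 1) :
    (∀ u v : V, (∃ i, (G i).Adj u v) →
      ∃ x, u ∈ Finset.univ.biUnion (fun i => B i x) ∧
           v ∈ Finset.univ.biUnion (fun i => B i x)) ∧
    (∀ (v x y z : V), x ≤ y → y ≤ z →
      v ∈ Finset.univ.biUnion (fun i => B i x) →
      v ∈ Finset.univ.biUnion (fun i => B i z) →
      v ∈ Finset.univ.biUnion (fun i => B i y)) ∧
    (∀ x : V, (Finset.univ.biUnion (fun i => B i x)).card ≤ ∑ i, (w i + 1)) := by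
  refine ⟨?_, ?_, ?_⟩
  · rintro u v ⟨i, hadj⟩
    obtain ⟨x, hu, hv⟩ := hcov i u v hadj
    exact ⟨x, mem_biUnion.2 ⟨i, mem_univ i, hu⟩, mem_biUnion.2 ⟨i, mem_univ i, hv⟩⟩
  · intro v x y z hxy hyz hx hz
    have hconn : (⋃ i, {x | v ∈ B i x}).OrdConnected :=
      Set.ordConnected_iUnion_of_mem
        (fun i => ⟨fun x hx z hz y hy => hint i v x y z hy.1 hy.2 hx hz⟩) (hself · v)
    simpa using hconn.out (by simpa using hx) (by simpa using hz) ⟨hxy, hyz⟩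
  · intro x
    calc (univ.biUnion fun i => B i x).card ≤ ∑ i, (B i x).card := card_biUnion_le
      _ ≤ ∑ i, (w i + 1) := sum_le_sum fun i _ => hwidth i x

/-- Combination step of Theorem 2: if path decompositions of graphs
`G 1, …, G m` on a common (linearly ordered) vertex set `V` are all indexed by
`V` itself, with `x ∈ B i x` for every index `x`, then the bag-wise union is a
path decomposition of the union graph of width at most `(∑ i, (w i + 1)) - 1`. -/
theorem union_of_path_decompositions {V : Type*} [Fintype V] [DecidableEq V]
    [LinearOrder V] (m : ℕ)
    (G : Fin m → SimpleGraph V) (B : Fin m → V → Finset V) (w : Fin m → ℕ)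
    (hcov : ∀ (i : Fin m) (u v : V), (G i).Adj u v → ∃ x, u ∈ B i x ∧ v ∈ B i x)
    (hint : ∀ (i : Fin m) (v x y z : V), x ≤ y → y ≤ z →
      v ∈ B i x → v ∈ B i z → v ∈ B i y)
    (hself : ∀ (i : Fin m) (x : V), x ∈ B i x)
    (hwidth : ∀ (i : Fin m) (x : V), (B i x).card ≤ w i + 1) :
    (∀ u v : V, (∃ i, (G i).Adj u v) →
      ∃ x, u ∈ Finset.univ.biUnion (fun i => B i x) ∧
           v ∈ Finset.univ.biUnion (fun i => B i x)) ∧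
    (∀ (v x y z : V), x ≤ y → y ≤ z →
      v ∈ Finset.univ.biUnion (fun i => B i x) →
      v ∈ Finset.univ.biUnion (fun i => B i z) →
      v ∈ Finset.univ.biUnion (fun i => B i y)) ∧
    (∀ x : V, (Finset.univ.biUnion (fun i => B i x)).card ≤ ∑ i, (w i + 1)) :=
  union_of_path_decompositions_general m G B w hcov hint hself hwidth
end

section
/- Let G be a graph with 2n vertices containing n independent edges (u_i, v_i), 1 ≤ i ≤ n. Suppose G admits an s-stack layout with vertex order σ in which u_1 < u_2 < ... < u_n < v_i for all i. Then there exist indices 1 ≤ j_1 < j_2 < ... < j_r ≤ n with r = ⌈n/s⌉ such that u_{j_1} < u_{j_2} < ... < u_{j_r} < v_{j_r} < ... < v_{j_2} < v_{j_1} in σ. -/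
/-!
Colour each matching edge `(u i, v i)` by its stack. Since all `u`'s precede all `v`'s, two edges
of the same stack cannot cross, so they must nest. By pigeonhole some stack holds at least
`⌈n/s⌉` of the `n` edges, and listing those in increasing order of `u` gives the nested family.
-/

open Finset

/-- Pigeonhole: some fibre of `f` has at least `(n + card β - 1) / card β = ⌈n / card β⌉`
elements. -/
theorem exists_strictMono_comp_eq {β : Type*} [Fintype β] {n : ℕ} (f : Fin n → β) :
    ∃ j : Fin ((n + Fintype.card β - 1) / Fintype.card β) → Fin n,
      StrictMono j ∧ ∀ a b, f (j a) = f (j b) := by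
  set k := Fintype.card β
  suffices ∃ F : Finset (Fin n), (n + k - 1) / k ≤ #F ∧ ∀ i ∈ F, ∀ i' ∈ F, f i = f i' by
    obtain ⟨F, hF, hFf⟩ := this
    obtain ⟨F', hF'F, hF'⟩ := exists_subset_card_eq hF
    have hmem (a) : F'.orderEmbOfFin hF' a ∈ F := hF'F (F'.orderEmbOfFin_mem hF' a)
    exact ⟨F'.orderEmbOfFin hF', (F'.orderEmbOfFin hF').strictMono,
      fun a b => hFf _ (hmem a) _ (hmem b)⟩
  rcases Nat.eq_zero_or_pos n with rfl | hn
  · refine ⟨∅, ?_, by simp⟩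
    rw [card_empty, Nat.le_zero, Nat.div_eq_zero_iff]
    omega
  have hk : 0 < k := Fintype.card_pos_iff.mpr ⟨f ⟨0, hn⟩⟩
  classical
  have hfibre : k * ((n - 1) / k) < Fintype.card (Fin n) := by
    rw [Fintype.card_fin]
    exact (Nat.mul_div_le (n - 1) k).trans_lt (by omega)
  obtain ⟨y, hy⟩ := Fintype.exists_lt_card_fiber_of_mul_lt_card f hfibre
  refine ⟨univ.filter (f · = y), ?_, by simp +contextual⟩
  have hceil : (n + k - 1) / k = (n - 1) / k + 1 := by
    rw [← Nat.add_div_right _ hk]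
    congr 1
    omega
  omega

theorem lt_of_mem_same_stack {V κ : Type*} [LinearOrder V] {G : SimpleGraph V} {c : V × V → κ}
    (hc : ∀ e f : V × V,
      (G.Adj e.1 e.2 ∧ e.1 < e.2) → (G.Adj f.1 f.2 ∧ f.1 < f.2) →
      c e = c f → ¬ (e.1 < f.1 ∧ f.1 < e.2 ∧ e.2 < f.2))
    {a b x y : V} (hab : G.Adj a b) (hxy : G.Adj x y) (hax : a < x) (hxb : x < b) (hx : x < y)
    (hyb : y ≠ b) (hcol : c (a, b) = c (x, y)) : y < b :=
  (lt_or_gt_of_ne hyb).resolve_right fun hby =>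
    hc (a, b) (x, y) ⟨hab, hax.trans hxb⟩ ⟨hxy, hx⟩ hcol ⟨hax, hxb, hby⟩

/-- Lemma 6: if a graph `G` contains `n` independent edges `(u i, v i)` with
`u 1 < u 2 < ⋯ < u n < v i` for all `i` in the vertex order of an `s`-stack
layout, then there are `r = ⌈n/s⌉` indices `j 1 < ⋯ < j r` with
`u (j 1) < ⋯ < u (j r) < v (j r) < ⋯ < v (j 1)`. -/
theorem separated_matching_rainbow {V : Type*} [LinearOrder V] (G : SimpleGraph V)
    (n s : ℕ) (u v : Fin n → V)
    (hu : StrictMono u) (hv : Function.Injective v)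
    (huv : ∀ i j : Fin n, u i < v j)
    (hadj : ∀ i : Fin n, G.Adj (u i) (v i))
    (c : V × V → Fin s)
    (hc : ∀ e f : V × V,
      (G.Adj e.1 e.2 ∧ e.1 < e.2) → (G.Adj f.1 f.2 ∧ f.1 < f.2) →
      c e = c f → ¬ (e.1 < f.1 ∧ f.1 < e.2 ∧ e.2 < f.2)) :
    ∃ j : Fin ((n + s - 1) / s) → Fin n,
      StrictMono j ∧ StrictMono (fun a => u (j a)) ∧
      StrictAnti (fun a => v (j a)) ∧
      (∀ a b, u (j a) < v (j b)) := by
  have hpigeon := exists_strictMono_comp_eq fun i => c (u i, v i)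
  rw [Fintype.card_fin] at hpigeon
  obtain ⟨j, hj, hcol⟩ := hpigeon
  refine ⟨j, hj, hu.comp hj, fun a b hab => ?_, fun a b => huv _ _⟩
  exact lt_of_mem_same_stack hc (hadj _) (hadj _) (hu (hj hab)) (huv _ _) (huv _ _)
    (hv.ne (hj hab).ne') (hcol a b)
end
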